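/- Let (Δ, μ) be a probability space and let (F_s)_{s≥0} be a measurable semiflow of measure-preserving maps on Δ (F_0 = Id, F_{s+t} = F_s∘F_t, each F_s measure-preserving, and (s, x) ↦ F_s x jointly measurable). Let w : Δ → ℝ be bounded measurable and let m, χ ∈ L^∞(μ; ℝ) satisfy ∫_0^1 w(F_s x) ds = m(x) + χ(F_1 x) − χ(x) for all x. Define Ŵ_n(x)(t) = n^{−1/2} ∫_0^{nt} w(F_s x) ds, define Y_n(x)(k/n) = n^{−1/2} Σ_{j=1}^{k} m(F_{n−j} x) for 0 ≤ k ≤ n with linear interpolation, and let h : C([0,1],ℝ) → C([0,1],ℝ) be (h g)(t) = g(1) − g(1−t). Then there exists C > 0 such that for all n ≥ 1 the Lévy–Prokhorov distance between the laws of h∘Ŵ_n and of Y_n satisfies Π(h∘Ŵ_n, Y_n) ≤ C n^{−1/2}. -/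

import Mathlib

open MeasureTheory
open scoped ENNReal NNReal

/-- The process `Ŵ_n(x)(t) = n^{-1/2} ∫_0^{nt} w(F_s x) ds` associated with a semiflow
`(F_s)` and an observable `w`. -/
noncomputable def flowPath {Δ E : Type*} [NormedAddCommGroup E] [NormedSpace ℝ E]
    (φ : ℝ → Δ → Δ) (w : Δ → E) (n : ℕ) (x : Δ) : ℝ → E :=
  fun t => ((n : ℝ) ^ (-(1 / 2 : ℝ))) • ∫ s in (0 : ℝ)..((n : ℝ) * t), w (φ s x)

/-- The piecewise-linear path which at `t = k/n` equals `n^{-1/2} Σ_{j=1}^{k} m(F_{n−j} x)`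
(`F_j` being the time-`j` map of the semiflow) and is linear in between. -/
noncomputable def semiflowReversedMartingalePath {Δ E : Type*} [NormedAddCommGroup E]
    [NormedSpace ℝ E] (φ : ℝ → Δ → Δ) (m : Δ → E) (n : ℕ) (x : Δ) : ℝ → E :=
  fun t => ((n : ℝ) ^ (-(1 / 2 : ℝ))) •
    ((∑ j ∈ Finset.Icc 1 ⌊(n : ℝ) * t⌋₊, m (φ ((n - j : ℕ) : ℝ) x)) +
      ((n : ℝ) * t - ⌊(n : ℝ) * t⌋₊) • m (φ ((n - (⌊(n : ℝ) * t⌋₊ + 1) : ℕ) : ℝ) x))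

/-- The time-reversal operator `(h g)(t) = g(1) − g(1−t)`. -/
def timeReversal {E : Type*} [SubtractionMonoid E] (g : ℝ → E) : ℝ → E :=
  fun t => g 1 - g (1 - t)

/-- The uniform (extended) distance between two paths over the time interval `[0,1]`. -/
noncomputable def supEDist01 {E : Type*} [PseudoEMetricSpace E] (g h : ℝ → E) : ℝ≥0∞ :=
  ⨆ t : Set.Icc (0 : ℝ) 1, edist (g t) (h t)

/-- The Lévy–Prokhorov distance `Π(μ,ν) = inf {ε > 0 : μ(B) ≤ ν(B^ε) + ε for all Borel B}`,
with respect to a given (extended) distance `d`. -/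
noncomputable def prokhorovDist {S : Type*} [MeasurableSpace S] (d : S → S → ℝ≥0∞)
    (μ ν : Measure S) : ℝ :=
  sInf {ε : ℝ | 0 < ε ∧ ∀ B : Set S, MeasurableSet B →
    μ B ≤ ν {y | ∃ x ∈ B, d x y < ENNReal.ofReal ε} + ENNReal.ofReal ε}

lemma prokhorovDist_le_of_pointwise {Δ S : Type*} [MeasurableSpace Δ] [MeasurableSpace S]
    (d : S → S → ℝ≥0∞) (μ : Measure Δ) {f g : Δ → S}
    (hf : Measurable f) (hg : Measurable g) {ε : ℝ} (hε : 0 < ε)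
    (h : ∀ x, d (f x) (g x) < ENNReal.ofReal ε) :
    prokhorovDist d (μ.map f) (μ.map g) ≤ ε := by
  refine csInf_le ⟨0, fun y hy => le_of_lt hy.1⟩ ⟨hε, fun B hB => ?_⟩
  rw [Measure.map_apply hf hB]
  calc μ (f ⁻¹' B)
      ≤ μ (g ⁻¹' {y | ∃ a ∈ B, d a y < ENNReal.ofReal ε}) :=
        measure_mono fun x hx => ⟨f x, hx, h x⟩
    _ ≤ (μ.map g) {y | ∃ a ∈ B, d a y < ENNReal.ofReal ε} :=
        Measure.le_map_apply hg.aemeasurable _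
    _ ≤ _ := le_self_add

/-- For a measure-preserving semiflow with
`∫_0^1 w(F_s x) ds = m(x) + χ(F_1 x) − χ(x)` and bounded `m, χ`, the time-reversed process
`h∘Ŵ_n` and the reversed martingale process `Y_n` satisfy `Π(h∘Ŵ_n, Y_n) ≤ C n^{-1/2}`. -/
theorem prokhorov_reversed_flowPath_vs_reversed_martingale
    {Δ : Type*} [MeasurableSpace Δ] (μ : Measure Δ) [IsProbabilityMeasure μ]
    (φ : ℝ → Δ → Δ)
    (hφ0 : φ 0 = id)
    (hφadd : ∀ s t : ℝ, 0 ≤ s → 0 ≤ t → φ (s + t) = φ s ∘ φ t)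
    (hφmp : ∀ s : ℝ, 0 ≤ s → MeasurePreserving (φ s) μ μ)
    (hφmeas : Measurable fun q : ℝ × Δ => φ q.1 q.2)
    (w : Δ → ℝ) (hw : Measurable w) (Cw : ℝ) (hwb : ∀ x, |w x| ≤ Cw)
    (m χ : Δ → ℝ) (hm : Measurable m) (hχ : Measurable χ)
    (Cm : ℝ) (hmb : ∀ x, |m x| ≤ Cm) (Cχ : ℝ) (hχb : ∀ x, |χ x| ≤ Cχ)
    (hdec : ∀ x, (∫ s in (0 : ℝ)..1, w (φ s x)) = m x + χ (φ 1 x) - χ x) :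
    ∃ C > (0 : ℝ), ∀ n : ℕ, 1 ≤ n →
      prokhorovDist supEDist01
          (μ.map fun x => timeReversal (flowPath φ w n x))
          (μ.map fun x => semiflowReversedMartingalePath φ m n x)
        ≤ C * (n : ℝ) ^ (-(1 / 2 : ℝ)) := by
  -- Δ is nonempty since μ is a probability measure
  have hne : Nonempty Δ := by
    by_contra h
    rw [not_nonempty_iff] at h
    have h1 : μ Set.univ = 1 := measure_univ
    rw [Set.univ_eq_empty_iff.2 h, measure_empty] at h1
    exact zero_ne_one h1
  obtain ⟨x0⟩ := hne
  have hCw : 0 ≤ Cw := le_trans (abs_nonneg _) (hwb x0)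
  have hCm : 0 ≤ Cm := le_trans (abs_nonneg _) (hmb x0)
  have hCχ : 0 ≤ Cχ := le_trans (abs_nonneg _) (hχb x0)
  set K : ℝ := Cw + Cm + 2 * Cχ with hK
  have hK0 : 0 ≤ K := by positivity
  refine ⟨K + 1, by positivity, ?_⟩
  intro n hn
  have hn0 : (0:ℝ) < (n:ℝ) := by exact_mod_cast hn
  set c : ℝ := (n : ℝ) ^ (-(1 / 2 : ℝ)) with hcdef
  have hc0 : 0 < c := Real.rpow_pos_of_pos hn0 _
  -- interval integrability of s ↦ w (φ s x)
  have hint : ∀ (x : Δ) (a b : ℝ), IntervalIntegrable (fun s => w (φ s x)) volume a b := by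
    intro x a b
    rw [intervalIntegrable_iff]
    refine Measure.integrableOn_of_bounded (M := Cw) (measure_Ioc_lt_top).ne
      ((hw.comp (hφmeas.comp (measurable_id.prodMk measurable_const))).aestronglyMeasurable)
      (ae_of_all _ fun s => ?_)
    simpa using hwb (φ s x)
  -- the unit-interval cohomological identity shifted by c ≥ 0
  have hunit : ∀ (x : Δ) (a : ℝ), 0 ≤ a →
      (∫ s in a..(a+1), w (φ s x)) = m (φ a x) + χ (φ (a+1) x) - χ (φ a x) := by
    intro x a ha
    have h1 : (∫ s in (0:ℝ)..1, w (φ s (φ a x))) = ∫ s in a..(a+1), w (φ s x) := by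
      have h2 := intervalIntegral.integral_comp_add_right (a := (0:ℝ)) (b := 1)
        (fun s => w (φ s x)) a
      rw [zero_add, add_comm (1:ℝ) a] at h2
      rw [← h2]
      apply intervalIntegral.integral_congr
      intro s hs
      rw [Set.uIcc_of_le (by norm_num : (0:ℝ) ≤ 1)] at hs
      show w (φ s (φ a x)) = w (φ (s + a) x)
      rw [hφadd s a hs.1 ha]
      rfl
    have h3 : φ 1 (φ a x) = φ (a+1) x := by
      rw [add_comm, hφadd 1 a zero_le_one ha]
      rfl
    rw [← h1, hdec (φ a x), h3]
  -- telescoping identity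
  have htele : ∀ (x : Δ) (k : ℕ), k ≤ n →
      (∫ s in ((n:ℝ) - k)..(n:ℝ), w (φ s x)) =
        (∑ j ∈ Finset.Icc 1 k, m (φ ((n - j : ℕ) : ℝ) x)) + χ (φ (n:ℝ) x)
          - χ (φ ((n - k : ℕ) : ℝ) x) := by
    intro x k
    induction k with
    | zero => intro _; simp
    | succ k ih =>
      intro hk
      have hk' : k ≤ n := Nat.le_of_succ_le hk
      have hkR : ((k:ℝ) + 1) ≤ (n:ℝ) := by exact_mod_cast hk
      have hc1 : ((n - (k+1) : ℕ) : ℝ) = (n:ℝ) - ((k:ℝ)+1) := by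
        rw [Nat.cast_sub hk]; push_cast; ring
      have hc2 : ((n - k : ℕ) : ℝ) = (n:ℝ) - (k:ℝ) := by
        rw [Nat.cast_sub hk']
      have hsplit : (∫ s in ((n:ℝ) - ((k:ℕ)+1:ℕ))..(n:ℝ), w (φ s x)) =
          (∫ s in ((n:ℝ) - ((k:ℝ)+1))..((n:ℝ) - (k:ℝ)), w (φ s x))
            + ∫ s in ((n:ℝ) - (k:ℝ))..(n:ℝ), w (φ s x) := by
        push_cast
        exact (intervalIntegral.integral_add_adjacent_intervals (hint x _ _) (hint x _ _)).symm
      have ha0 : (0:ℝ) ≤ (n:ℝ) - ((k:ℝ)+1) := by linarith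
      have hpiece := hunit x ((n:ℝ) - ((k:ℝ)+1)) ha0
      have harg : (n:ℝ) - ((k:ℝ)+1) + 1 = (n:ℝ) - (k:ℝ) := by ring
      rw [harg] at hpiece
      rw [hsplit, hpiece, ih hk', Finset.sum_Icc_succ_top (Nat.one_le_iff_ne_zero.2 (Nat.succ_ne_zero k)) ]
      rw [hc1, hc2]
      push_cast
      ring
  -- the deterministic pointwise bound
  have hmain : ∀ (x : Δ), ∀ t ∈ Set.Icc (0:ℝ) 1,
      |timeReversal (flowPath φ w n x) t - semiflowReversedMartingalePath φ m n x t|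
        ≤ c * K := by
    intro x t ht
    have hnt0 : 0 ≤ (n:ℝ) * t := mul_nonneg hn0.le ht.1
    set k := ⌊(n:ℝ)*t⌋₊ with hkdef
    have hkle : (k:ℝ) ≤ (n:ℝ)*t := Nat.floor_le hnt0
    have hklt : (n:ℝ)*t < (k:ℝ) + 1 := Nat.lt_floor_add_one _
    have hkn : k ≤ n := by
      have h4 : (n:ℝ)*t ≤ ((n:ℕ):ℝ) := by nlinarith [ht.2, ht.1]
      simpa [hkdef] using Nat.floor_le_floor (R := ℝ) h4 |>.trans_eq (Nat.floor_natCast n)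
    have hc2 : ((n - k : ℕ) : ℝ) = (n:ℝ) - (k:ℝ) := by rw [Nat.cast_sub hkn]
    have hTR : timeReversal (flowPath φ w n x) t
        = c • ((∫ s in ((n:ℝ) - (n:ℝ)*t)..((n:ℝ) - (k:ℝ)), w (φ s x))
            + ∫ s in ((n:ℝ) - (k:ℝ))..(n:ℝ), w (φ s x)) := by
      show flowPath φ w n x 1 - flowPath φ w n x (1 - t) = _
      simp only [flowPath]
      rw [← smul_sub, mul_one,
        intervalIntegral.integral_interval_sub_left (hint x _ _) (hint x _ _)]
      rw [intervalIntegral.integral_add_adjacent_intervals (hint x _ _) (hint x _ _)]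
      congr 2
      ring
    set R := ∫ s in ((n:ℝ) - (n:ℝ)*t)..((n:ℝ) - (k:ℝ)), w (φ s x) with hRdef
    set S := ∑ j ∈ Finset.Icc 1 k, m (φ ((n - j : ℕ) : ℝ) x) with hSdef
    set M := m (φ ((n - (k + 1) : ℕ) : ℝ) x) with hMdef
    set r := (n:ℝ)*t - (k:ℝ) with hrdef
    have hY : semiflowReversedMartingalePath φ m n x t = c • (S + r * M) := rfl
    have hint2 : (∫ s in ((n:ℝ) - (k:ℝ))..(n:ℝ), w (φ s x))
        = S + χ (φ (n:ℝ) x) - χ (φ ((n - k : ℕ) : ℝ) x) := by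
      have h5 := htele x k hkn
      rw [← hSdef] at h5
      exact h5
    have hdiff : timeReversal (flowPath φ w n x) t - semiflowReversedMartingalePath φ m n x t
        = c * (R + χ (φ (n:ℝ) x) - χ (φ ((n - k : ℕ) : ℝ) x) - r * M) := by
      rw [hTR, hY, hint2, smul_eq_mul, smul_eq_mul]
      ring
    rw [hdiff, abs_mul, abs_of_nonneg hc0.le]
    refine mul_le_mul_of_nonneg_left ?_ hc0.le
    have hr0 : 0 ≤ r := by simp only [hrdef]; linarith
    have hr1 : r ≤ 1 := by simp only [hrdef]; linarith
    have hR : |R| ≤ Cw := by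
      have := intervalIntegral.norm_integral_le_of_norm_le_const
        (a := (n:ℝ) - (n:ℝ)*t) (b := (n:ℝ) - (k:ℝ)) (C := Cw)
        (f := fun s => w (φ s x)) (fun s _ => by simpa using hwb (φ s x))
      rw [Real.norm_eq_abs] at this
      have habs : |(n:ℝ) - (k:ℝ) - ((n:ℝ) - (n:ℝ)*t)| ≤ 1 := by
        rw [abs_le]; constructor <;> linarith
      nlinarith [abs_nonneg R]
    have hrM : |r * M| ≤ Cm := by
      rw [abs_mul, abs_of_nonneg hr0]
      calc r * |M| ≤ 1 * Cm := by
            apply mul_le_mul hr1 (hmb _) (abs_nonneg _) zero_le_one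
        _ = Cm := one_mul Cm
    have h2 := abs_le.1 (hχb (φ (n:ℝ) x))
    have h3 := abs_le.1 (hχb (φ ((n - k : ℕ) : ℝ) x))
    have h1 := abs_le.1 hR
    have h4 := abs_le.1 hrM
    rw [abs_le, hK]
    constructor <;> [linarith; linarith]
  -- measurability of the two path maps
  have hbint : ∀ b : ℝ, Measurable fun x => ∫ s in (0:ℝ)..b, w (φ s x) := by
    intro b
    simp_rw [intervalIntegral.intervalIntegral_eq_integral_uIoc]
    refine Measurable.fun_smul measurable_const ?_
    have hsm : StronglyMeasurable fun p : Δ × ℝ => w (φ p.2 p.1) :=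
      (hw.comp (hφmeas.comp measurable_swap)).stronglyMeasurable
    exact (hsm.integral_prod_right' (ν := volume.restrict (Set.uIoc 0 b))).measurable
  have hfm : Measurable fun x => timeReversal (flowPath φ w n x) := by
    rw [measurable_pi_iff]
    intro t
    simp only [timeReversal, flowPath]
    exact ((hbint ((n:ℝ)*1)).const_smul c).sub ((hbint ((n:ℝ)*(1-t))).const_smul c)
  have hgm : Measurable fun x => semiflowReversedMartingalePath φ m n x := by
    rw [measurable_pi_iff]
    intro t
    simp only [semiflowReversedMartingalePath]
    refine Measurable.fun_smul measurable_const (Measurable.fun_add ?_ ?_)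
    · exact Finset.measurable_sum _ fun j _ =>
        hm.comp (hφmeas.comp (measurable_const.prodMk measurable_id))
    · exact Measurable.fun_smul measurable_const
        (hm.comp (hφmeas.comp (measurable_const.prodMk measurable_id)))
  -- conclude via the Prokhorov lemma
  have hε : 0 < (K + 1) * c := by positivity
  refine le_trans (prokhorovDist_le_of_pointwise supEDist01 μ hfm hgm hε ?_) (by ring_nf; rfl)
  intro x
  have hsup : supEDist01 (timeReversal (flowPath φ w n x))
      (semiflowReversedMartingalePath φ m n x) ≤ ENNReal.ofReal (c * K) := by
    refine iSup_le fun t => ?_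
    rw [edist_dist, Real.dist_eq]
    exact ENNReal.ofReal_le_ofReal (hmain x t t.2)
  refine lt_of_le_of_lt hsup ?_
  rw [ENNReal.ofReal_lt_ofReal_iff hε]
  nlinarith
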